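/- Let p be a prime and r ≥ 1. With F(x,y) = x₁y₁² + x₂y₂² + x₃y₃² and S_q(m,n) the complete exponential sum, one has S_{p^r}(0,0) = p^{4r + 3⌊r/2⌋}·(1 − 1/p). -/

import Mathlib

/-- e_q(t) = exp(2πit/q). -/
noncomputable def eChar (q : ℕ) (t : ℤ) : ℂ :=
  Complex.exp (2 * Real.pi * Complex.I * (t : ℂ) / (q : ℂ))

/-- The complete exponential sum S_q(m,n) for F(x,y) = x₁y₁² + x₂y₂² + x₃y₃²:
S_q(m,n) = Σ*_{a mod q} Σ_{x,y mod q} e_q(aF(x,y) + m·x + n·y). -/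
noncomputable def expSum (q : ℕ) (m₁ m₂ m₃ n₁ n₂ n₃ : ℤ) : ℂ :=
  ∑ a ∈ (Finset.range q).filter (fun a => Nat.Coprime a q),
    ∑ x₁ ∈ Finset.range q, ∑ x₂ ∈ Finset.range q, ∑ x₃ ∈ Finset.range q,
      ∑ y₁ ∈ Finset.range q, ∑ y₂ ∈ Finset.range q, ∑ y₃ ∈ Finset.range q,
        eChar q ((a : ℤ) * ((x₁ : ℤ) * (y₁ : ℤ) ^ 2 + (x₂ : ℤ) * (y₂ : ℤ) ^ 2
            + (x₃ : ℤ) * (y₃ : ℤ) ^ 2)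
          + m₁ * (x₁ : ℤ) + m₂ * (x₂ : ℤ) + m₃ * (x₃ : ℤ)
          + n₁ * (y₁ : ℤ) + n₂ * (y₂ : ℤ) + n₃ * (y₃ : ℤ))

/-!
At `m = n = 0` the sum over `(x, y)` factors into three identical sums over `(xᵢ, yᵢ)`.
Summing `e_q(a x y²)` over `x` detects `q ∣ y²`, so, `a` being a unit, each factor equals
`q · #{y mod q : q ∣ y²}`. For `q = p^r` we have `p^r ∣ y² ↔ p^⌈r/2⌉ ∣ y`, so this count is
`p^⌊r/2⌋`, and `S_{p^r}(0,0) = φ(p^r) · p^{3(r + ⌊r/2⌋)}`.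
-/

open Finset

section eChar

variable {q : ℕ}

lemma eChar_add (hq : q ≠ 0) (s t : ℤ) : eChar q (s + t) = eChar q s * eChar q t := by
  have hqC : (q : ℂ) ≠ 0 := Nat.cast_ne_zero.mpr hq
  rw [eChar, eChar, eChar, ← Complex.exp_add]
  congr 1
  push_cast
  field_simp

lemma eChar_mul_natCast (c : ℤ) (n : ℕ) : eChar q (c * n) = eChar q c ^ n := by
  rw [eChar, eChar, ← Complex.exp_nat_mul]
  congr 1
  push_cast
  ring

lemma eChar_eq_one_iff (hq : q ≠ 0) (c : ℤ) : eChar q c = 1 ↔ (q : ℤ) ∣ c := by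
  have hqC : (q : ℂ) ≠ 0 := Nat.cast_ne_zero.mpr hq
  rw [eChar, Complex.exp_eq_one_iff]
  constructor
  · rintro ⟨n, hn⟩
    field_simp at hn
    exact ⟨n, by exact_mod_cast hn⟩
  · rintro ⟨n, rfl⟩
    exact ⟨n, by push_cast; field_simp⟩

lemma eChar_pow_self (hq : q ≠ 0) (c : ℤ) : eChar q c ^ q = 1 := by
  rw [← eChar_mul_natCast, eChar_eq_one_iff hq]
  exact dvd_mul_left _ _

lemma sum_range_eChar_mul (hq : q ≠ 0) (c : ℤ) :
    ∑ x ∈ range q, eChar q (c * x) = if (q : ℤ) ∣ c then (q : ℂ) else 0 := by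
  simp only [eChar_mul_natCast]
  split_ifs with hc
  · simp [(eChar_eq_one_iff hq c).mpr hc]
  · have hne : eChar q c ≠ 1 := mt (eChar_eq_one_iff hq c).mp hc
    rw [geom_sum_eq hne, eChar_pow_self hq c, sub_self, zero_div]

end eChar

lemma sum_sum_eChar_mul_mul_sq {q a : ℕ} (hq : q ≠ 0) (ha : a.Coprime q) :
    ∑ x ∈ range q, ∑ y ∈ range q, eChar q (a * x * y ^ 2)
      = q * #{y ∈ range q | q ∣ y ^ 2} := by
  have hinner (y : ℕ) : ∑ x ∈ range q, eChar q (a * x * y ^ 2)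
      = if q ∣ y ^ 2 then (q : ℂ) else 0 := by
    have hdvd : (q : ℤ) ∣ a * y ^ 2 ↔ q ∣ y ^ 2 := by
      exact_mod_cast (⟨ha.symm.dvd_of_dvd_mul_left, fun h => h.mul_left a⟩ : q ∣ a * y ^ 2 ↔ _)
    simp_rw [mul_right_comm _ _ ((y : ℤ) ^ 2), sum_range_eChar_mul hq, hdvd]
  rw [sum_comm, sum_congr rfl fun y _ => hinner y, ← sum_filter, sum_const, nsmul_eq_mul,
    mul_comm]

lemma sum_mul_mul_eq_pow_three {ι R : Type*} [CommSemiring R] (s : Finset ι) (g : ι → ι → R) :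
    ∑ x₁ ∈ s, ∑ x₂ ∈ s, ∑ x₃ ∈ s, ∑ y₁ ∈ s, ∑ y₂ ∈ s, ∑ y₃ ∈ s,
      g x₁ y₁ * g x₂ y₂ * g x₃ y₃ = (∑ x ∈ s, ∑ y ∈ s, g x y) ^ 3 := by
  simp only [← mul_sum, ← sum_mul]
  ring

lemma expSum_zero {q : ℕ} (hq : q ≠ 0) :
    expSum q 0 0 0 0 0 0 = q.totient * (q * #{y ∈ range q | q ∣ y ^ 2}) ^ 3 := by
  have hsplit (a x₁ x₂ x₃ y₁ y₂ y₃ : ℕ) :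
      eChar q (a * (x₁ * y₁ ^ 2 + x₂ * y₂ ^ 2 + x₃ * y₃ ^ 2))
        = eChar q (a * x₁ * y₁ ^ 2) * eChar q (a * x₂ * y₂ ^ 2) * eChar q (a * x₃ * y₃ ^ 2) := by
    rw [← eChar_add hq, ← eChar_add hq]
    ring_nf
  have hcard : #{a ∈ range q | a.Coprime q} = q.totient := by
    simp only [Nat.totient, Nat.coprime_comm]
  simp only [expSum, zero_mul, add_zero, hsplit, sum_mul_mul_eq_pow_three]
  rw [sum_congr rfl fun a ha => by rw [sum_sum_eChar_mul_mul_sq hq (mem_filter.mp ha).2],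
    sum_const, hcard, nsmul_eq_mul]

lemma Nat.Prime.pow_dvd_sq_iff {p : ℕ} (hp : p.Prime) (r y : ℕ) :
    p ^ r ∣ y ^ 2 ↔ p ^ (r - r / 2) ∣ y := by
  rcases eq_or_ne y 0 with rfl | hy
  · simp
  rw [hp.pow_dvd_iff_le_factorization (pow_ne_zero 2 hy), hp.pow_dvd_iff_le_factorization hy,
    Nat.factorization_pow, Finsupp.smul_apply, smul_eq_mul]
  omega

lemma card_filter_dvd_range_mul {d : ℕ} (hd : d ≠ 0) (k : ℕ) :
    #{y ∈ range (d * k) | d ∣ y} = k := by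
  have himage : {y ∈ range (d * k) | d ∣ y} = (range k).map ⟨(d * ·), mul_right_injective₀ hd⟩ := by
    ext y
    simp only [mem_filter, mem_range, mem_map, Function.Embedding.coeFn_mk]
    constructor
    · rintro ⟨hy, t, rfl⟩
      exact ⟨t, lt_of_mul_lt_mul_left hy d.zero_le, rfl⟩
    · rintro ⟨t, ht, rfl⟩
      exact ⟨by gcongr, dvd_mul_right d t⟩
  rw [himage, card_map, card_range]

lemma card_filter_prime_pow_dvd_sq {p : ℕ} (hp : p.Prime) (r : ℕ) :
    #{y ∈ range (p ^ r) | p ^ r ∣ y ^ 2} = p ^ (r / 2) := by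
  have hpow : p ^ r = p ^ (r - r / 2) * p ^ (r / 2) := by rw [← pow_add]; congr 1; omega
  simp only [hp.pow_dvd_sq_iff]
  rw [hpow, card_filter_dvd_range_mul (pow_ne_zero _ hp.ne_zero)]

/-- S_{p^r}(0,0) = p^{4r + 3⌊r/2⌋}·(1 − 1/p). -/
theorem stmt11 (p : ℕ) (hp : p.Prime) (r : ℕ) (hr : 1 ≤ r) :
    expSum (p ^ r) 0 0 0 0 0 0
      = (p : ℂ) ^ (4 * r + 3 * (r / 2)) * (1 - 1 / (p : ℂ)) := by
  have hpC : (p : ℂ) ≠ 0 := Nat.cast_ne_zero.mpr hp.ne_zero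
  rw [expSum_zero (pow_ne_zero r hp.ne_zero), Nat.totient_prime_pow hp hr,
    card_filter_prime_pow_dvd_sq hp]
  have hexp : 4 * r + 3 * (r / 2) = (r - 1) + 1 + 3 * (r + r / 2) := by omega
  push_cast [hp.one_le, hexp, pow_add, pow_mul]
  field_simp
  ring
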